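/- arXiv:1803.02604 — 13 statements merged into one kernel-verified Lean document; each statement's English description precedes it below -/
import Mathlib

section
/- Let n be a positive integer and let α, β be partial contractions in CP_n. Then α L* β if and only if im α = im β. -/
/-- A partial transformation of the chain `[n] = {1,…,n}`, encoded as a map
`ℕ → Option ℕ`: `α x = some y` means `x ∈ dom α` and `xα = y`. -/
def IsPT (n : ℕ) (α : ℕ → Option ℕ) : Prop :=
  ∀ x y, α x = some y → x ∈ Set.Icc 1 n ∧ y ∈ Set.Icc 1 n

/-- Composition of partial transformations: apply `α` first, then `β`. -/
def pcomp (α β : ℕ → Option ℕ) : ℕ → Option ℕ := fun x => (α x).bind β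

/-- `α` is a contraction: `|xα − yα| ≤ |x − y|` on its domain. -/
def IsContraction (α : ℕ → Option ℕ) : Prop :=
  ∀ x y a b, α x = some a → α y = some b → Nat.dist a b ≤ Nat.dist x y

def IsOrderPreserving (α : ℕ → Option ℕ) : Prop :=
  ∀ x y a b, α x = some a → α y = some b → x ≤ y → a ≤ b

def IsOrderReversing (α : ℕ → Option ℕ) : Prop :=
  ∀ x y a b, α x = some a → α y = some b → x ≤ y → b ≤ a

/-- `CP n`: the partial contractions of `[n]`. -/
def CP (n : ℕ) (α : ℕ → Option ℕ) : Prop := IsPT n α ∧ IsContraction α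

/-- `OCP n`: the order preserving partial contractions of `[n]`. -/
def OCP (n : ℕ) (α : ℕ → Option ℕ) : Prop := CP n α ∧ IsOrderPreserving α

/-- `ORCP n`: the order preserving or order reversing partial contractions of `[n]`. -/
def ORCP (n : ℕ) (α : ℕ → Option ℕ) : Prop :=
  CP n α ∧ (IsOrderPreserving α ∨ IsOrderReversing α)

/-- The image of a partial transformation. -/
def img (α : ℕ → Option ℕ) : Set ℕ := {y | ∃ x, α x = some y}

/-- The kernel of a partial transformation:
`{(x,y) ∈ dom α × dom α : xα = yα}`. -/
def pker (α : ℕ → Option ℕ) : Set (ℕ × ℕ) :=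
  {p | α p.1 ≠ none ∧ α p.1 = α p.2}

/-- The starred Green's relation `L*` relative to the class `S`:
`α L* β` iff for all `γ, δ ∈ S`, `αγ = αδ ⟺ βγ = βδ`. -/
def LStar (S : (ℕ → Option ℕ) → Prop) (α β : ℕ → Option ℕ) : Prop :=
  ∀ γ δ, S γ → S δ → (pcomp α γ = pcomp α δ ↔ pcomp β γ = pcomp β δ)

/-- The starred Green's relation `R*` relative to the class `S`:
`α R* β` iff for all `γ, δ ∈ S`, `γα = δα ⟺ γβ = δβ`. -/
def RStar (S : (ℕ → Option ℕ) → Prop) (α β : ℕ → Option ℕ) : Prop :=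
  ∀ γ δ, S γ → S δ → (pcomp γ α = pcomp δ α ↔ pcomp γ β = pcomp δ β)


lemma pcomp_eq_iff (α γ δ : ℕ → Option ℕ) :
    pcomp α γ = pcomp α δ ↔ ∀ y ∈ img α, γ y = δ y := by
  constructor
  · rintro h y ⟨x, hx⟩
    have := congrFun h x
    simpa [pcomp, hx] using this
  · intro h
    funext x
    simp only [pcomp]
    cases hx : α x with
    | none => rfl
    | some y => exact h y ⟨x, hx⟩

lemma img_subset_of_lstar (n : ℕ) (α β : ℕ → Option ℕ)
    (hα : CP n α) (h : LStar (CP n) α β) : img α ⊆ img β := by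
  rintro y ⟨x, hx⟩
  have hy1 : y ∈ Set.Icc 1 n := (hα.1 x y hx).2
  set γ : ℕ → Option ℕ := fun z => if z = y then some y else none with hγdef
  have hγ : CP n γ := by
    constructor
    · intro a b hab
      simp only [γ] at hab
      split at hab
      · cases hab; subst ‹a = y›; exact ⟨hy1, hy1⟩
      · exact absurd hab (by simp)
    · intro a b c d hac hbd
      simp only [γ] at hac hbd
      split at hac
      · split at hbd
        · cases hac; cases hbd; simp [Nat.dist_self]
        · exact absurd hbd (by simp)
      · exact absurd hac (by simp)
  have hδ : CP n (fun _ => none) := by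
    constructor
    · intro a b hab; exact absurd hab (by simp)
    · intro a b c d hac _; exact absurd hac (by simp)
  have hne : pcomp α γ ≠ pcomp α (fun _ => none) := by
    intro heq
    have := congrFun heq x
    simp [pcomp, hx, γ] at this
  have hne2 : pcomp β γ ≠ pcomp β (fun _ => none) := by
    intro hb
    exact hne ((h γ (fun _ => none) hγ hδ).mpr hb)
  obtain ⟨x', hx'⟩ := Function.ne_iff.mp hne2
  simp only [pcomp] at hx'
  cases hbx : β x' with
  | none => rw [hbx] at hx'; simp at hx'
  | some z =>
    rw [hbx] at hx'
    simp only [Option.bind_some, Option.bind_none] at hx'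
    have hz : z = y := by
      by_contra hzy
      simp [γ, hzy] at hx'
    exact ⟨x', hz ▸ hbx⟩

/-- Theorem 2.1(i) for `CP n`: `α L* β` iff `im α = im β`. -/
theorem lstar_iff_img_eq_CP (n : ℕ) (hn : 0 < n) (α β : ℕ → Option ℕ)
    (hα : CP n α) (hβ : CP n β) :
    LStar (CP n) α β ↔ img α = img β := by
  constructor
  · intro h
    exact Set.Subset.antisymm (img_subset_of_lstar n α β hα h)
      (img_subset_of_lstar n β α hβ (fun γ δ hγ hδ => (h γ δ hγ hδ).symm))
  · intro h γ δ _ _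
    rw [pcomp_eq_iff, pcomp_eq_iff, h]
end

section
/- Let n be a positive integer and let α, β be partial contractions in CP_n. Then α R* β if and only if ker α = ker β (equality of relations; in particular dom α = dom β and, for all x, y ∈ dom α, xα = yα if and only if xβ = yβ). -/
/-- Constant partial map with domain `[n]`. -/
def cmap (n x : ℕ) : ℕ → Option ℕ := fun z => if z ∈ Set.Icc 1 n then some x else none

lemma cmap_CP (n x : ℕ) (hx : x ∈ Set.Icc 1 n) : CP n (cmap n x) := by
  constructor
  · intro z y h
    unfold cmap at h
    by_cases h1 : z ∈ Set.Icc 1 n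
    · simp [h1] at h; exact ⟨h1, h ▸ hx⟩
    · simp [h1] at h
  · intro z w a b ha hb
    unfold cmap at ha hb
    by_cases h1 : z ∈ Set.Icc 1 n <;> simp [h1] at ha
    by_cases h2 : w ∈ Set.Icc 1 n <;> simp [h2] at hb
    subst ha; subst hb; simp [Nat.dist_self]

lemma empty_CP (n : ℕ) : CP n (fun _ => none) := by
  constructor
  · intro x y h; simp at h
  · intro x y a b ha; simp at ha

lemma pker_dom (α β : ℕ → Option ℕ) (h : pker α = pker β) (t : ℕ)
    (ht : α t ≠ none) : β t ≠ none := by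
  have : (t, t) ∈ pker α := ⟨ht, rfl⟩
  rw [h] at this
  exact this.1

lemma comp_eq_of_pker (α β γ δ : ℕ → Option ℕ) (h : pker α = pker β)
    (h1 : pcomp γ α = pcomp δ α) : pcomp γ β = pcomp δ β := by
  funext z
  have hz := congrFun h1 z
  simp only [pcomp] at hz ⊢
  cases hu : γ z with
  | none =>
    cases hv : δ z with
    | none => rfl
    | some b =>
      rw [hu, hv] at hz; simp at hz ⊢
      by_contra hb
      exact (pker_dom β α h.symm b (fun e => hb e.symm)) hz.symm
  | some a =>
    cases hv : δ z with
    | none =>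
      rw [hu, hv] at hz; simp at hz ⊢
      by_contra ha
      exact (pker_dom β α h.symm a ha) hz
    | some b =>
      rw [hu, hv] at hz; simp at hz ⊢
      by_cases hna : α a = none
      · have hnb : α b = none := by rw [← hz, hna]
        have hba : β a = none := by
          by_contra hc
          exact (pker_dom β α h.symm a hc) hna
        have hbb : β b = none := by
          by_contra hc
          exact (pker_dom β α h.symm b hc) hnb
        rw [hba, hbb]
      · have : (a, b) ∈ pker α := ⟨hna, hz⟩
        rw [h] at this
        exact this.2

lemma ker_subset (n : ℕ) (hn : 0 < n) (α β : ℕ → Option ℕ)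
    (hα : CP n α) (hR : RStar (CP n) α β) : pker α ⊆ pker β := by
  rintro ⟨x, y⟩ ⟨hne, heq⟩
  simp only at hne heq
  obtain ⟨a, ha⟩ := Option.ne_none_iff_exists'.mp hne
  have hx : x ∈ Set.Icc 1 n := (hα.1 x a ha).1
  have hy : y ∈ Set.Icc 1 n := (hα.1 y a (heq ▸ ha)).1
  have h1n : (1 : ℕ) ∈ Set.Icc 1 n := ⟨le_refl 1, hn⟩
  -- β x ≠ none
  have hbx : β x ≠ none := by
    intro hbn
    have hiff := hR (cmap n x) (fun _ => none) (cmap_CP n x hx) (empty_CP n)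
    have hPβ : pcomp (cmap n x) β = pcomp (fun _ => none) β := by
      funext z
      simp only [pcomp, cmap]
      by_cases hz : z ∈ Set.Icc 1 n <;> simp [hz, hbn]
    have hPα := hiff.mpr hPβ
    have := congrFun hPα 1
    simp only [pcomp, cmap, h1n, if_pos] at this
    simp [ha] at this
  -- β x = β y
  have hbxy : β x = β y := by
    have hiff := hR (cmap n x) (cmap n y) (cmap_CP n x hx) (cmap_CP n y hy)
    have hPα : pcomp (cmap n x) α = pcomp (cmap n y) α := by
      funext z
      simp only [pcomp, cmap]
      by_cases hz : z ∈ Set.Icc 1 n <;> simp [hz, heq]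
    have hPβ := hiff.mp hPα
    have := congrFun hPβ 1
    simpa [pcomp, cmap, h1n] using this
  exact ⟨hbx, hbxy⟩

/-- Theorem 2.1(ii) for `CP n`: `α R* β` iff `ker α = ker β`. -/
theorem rstar_iff_ker_eq_CP (n : ℕ) (hn : 0 < n) (α β : ℕ → Option ℕ)
    (hα : CP n α) (hβ : CP n β) :
    RStar (CP n) α β ↔ pker α = pker β := by
  constructor
  · intro hR
    exact Set.Subset.antisymm (ker_subset n hn α β hα hR)
      (ker_subset n hn β α hβ (fun γ δ hγ hδ => (hR γ δ hγ hδ).symm))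
  · intro h γ δ _ _
    exact ⟨comp_eq_of_pker α β γ δ h, comp_eq_of_pker β α γ δ h.symm⟩
end

section
/- Let n be a positive integer and let α, β be partial contractions in CP_n. Then α D* β if and only if |im α| = |im β|. -/
/-- `D*` relative to `S`: the join of `L*` and `R*`, i.e. the smallest
equivalence relation containing both. -/
def DStar (S : (ℕ → Option ℕ) → Prop) (α β : ℕ → Option ℕ) : Prop :=
  Relation.EqvGen (fun a b => S a ∧ S b ∧ (LStar S a b ∨ RStar S a b)) α β

/-!
`L*` preserves images and `R*` preserves kernels in `CP n`: test them against partial identities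
and one-point maps. Equal kernels give images of equal size, so `|im α|` is a `D*`-invariant.
Conversely `α L* id_{im α} R* r_{im α}`, where `r_A` is the order-preserving map of `A` onto
`{1, …, |A|}`; it is a contraction because ranks grow no faster than elements, and `R*` holds since
`r_A` and `id_A` are right multiples of each other. If `|im α| = |im β|`, then `r_{im α}` and
`r_{im β}` have the same image and are therefore `L*`-related.
-/

theorem IsPT.apply_eq_none {n : ℕ} {α : ℕ → Option ℕ} (hα : IsPT n α) {x : ℕ}
    (hx : x ∉ Set.Icc 1 n) : α x = none :=
  Option.eq_none_iff_forall_ne_some.mpr fun y hy => hx (hα x y hy).1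

theorem IsPT.img_subset_Icc {n : ℕ} {α : ℕ → Option ℕ} (hα : IsPT n α) :
    img α ⊆ Set.Icc 1 n := fun y ⟨x, hx⟩ => (hα x y hx).2

theorem IsPT.img_finite {n : ℕ} {α : ℕ → Option ℕ} (hα : IsPT n α) : (img α).Finite :=
  (Set.finite_Icc 1 n).subset hα.img_subset_Icc

theorem pcomp_assoc (α β γ : ℕ → Option ℕ) :
    pcomp (pcomp α β) γ = pcomp α (pcomp β γ) := by
  funext x
  exact Option.bind_assoc _ _ _

theorem pcomp_eq_pcomp_iff {α γ δ : ℕ → Option ℕ} :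
    pcomp α γ = pcomp α δ ↔ ∀ y ∈ img α, γ y = δ y := by
  constructor
  · rintro h y ⟨x, hx⟩
    simpa [pcomp, hx] using congrFun h x
  · intro h
    funext x
    cases hx : α x with
    | none => simp [pcomp, hx]
    | some y => simpa [pcomp, hx] using h y ⟨x, hx⟩

open Classical in
noncomputable def partialId (A : Set ℕ) : ℕ → Option ℕ := fun x => if x ∈ A then some x else none

@[simp]
theorem partialId_eq_some {A : Set ℕ} {x y : ℕ} : partialId A x = some y ↔ x ∈ A ∧ x = y := by
  unfold partialId
  split_ifs with h <;> simp [h]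

theorem img_partialId (A : Set ℕ) : img (partialId A) = A := by
  ext y
  simp [img]

theorem cp_partialId {n : ℕ} {A : Set ℕ} (hA : A ⊆ Set.Icc 1 n) : CP n (partialId A) := by
  refine ⟨fun x y h => ?_, fun x y a b hx hy => ?_⟩
  · obtain ⟨hx, rfl⟩ := partialId_eq_some.mp h
    exact ⟨hA hx, hA hx⟩
  · obtain ⟨-, rfl⟩ := partialId_eq_some.mp hx
    obtain ⟨-, rfl⟩ := partialId_eq_some.mp hy
    exact le_rfl

theorem LStar.of_img_eq (S : (ℕ → Option ℕ) → Prop) {α β : ℕ → Option ℕ}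
    (h : img α = img β) : LStar S α β := by
  intro γ δ _ _
  rw [pcomp_eq_pcomp_iff, pcomp_eq_pcomp_iff, h]

theorem LStar.symm {S : (ℕ → Option ℕ) → Prop} {α β : ℕ → Option ℕ} (h : LStar S α β) :
    LStar S β α :=
  fun γ δ hγ hδ => (h γ δ hγ hδ).symm

theorem LStar.img_subset {n : ℕ} {α β : ℕ → Option ℕ} (hα : IsPT n α) (hβ : IsPT n β)
    (h : LStar (CP n) α β) : img β ⊆ img α := by
  have hαβ := (h _ _ (cp_partialId subset_rfl) (cp_partialId hα.img_subset_Icc)).mp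
    (pcomp_eq_pcomp_iff.mpr fun y hy => by simp [partialId, hy, hα.img_subset_Icc hy])
  intro y hy
  simpa [partialId, hy, hβ.img_subset_Icc hy] using pcomp_eq_pcomp_iff.mp hαβ y hy

theorem LStar.img_eq {n : ℕ} {α β : ℕ → Option ℕ} (hα : IsPT n α) (hβ : IsPT n β)
    (h : LStar (CP n) α β) : img α = img β :=
  (h.symm.img_subset hβ hα).antisymm (h.img_subset hα hβ)

theorem RStar.of_pcomp_eq (S : (ℕ → Option ℕ) → Prop) {α β σ τ : ℕ → Option ℕ}
    (hβ : pcomp α σ = β) (hα : pcomp β τ = α) : RStar S α β := by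
  intro γ δ _ _
  constructor
  · intro h
    rw [← hβ, ← pcomp_assoc, h, pcomp_assoc]
  · intro h
    rw [← hα, ← pcomp_assoc, h, pcomp_assoc]

def pointMap (x : ℕ) (o : Option ℕ) : ℕ → Option ℕ := fun z => if z = x then o else none

theorem pcomp_pointMap (x : ℕ) (o : Option ℕ) (α : ℕ → Option ℕ) :
    pcomp (pointMap x o) α = pointMap x (o.bind α) := by
  funext z
  by_cases hz : z = x <;> simp [pcomp, pointMap, hz]

theorem pointMap_injective (x : ℕ) : Function.Injective (pointMap x) :=
  fun o o' h => by simpa [pointMap] using congrFun h x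

theorem cp_pointMap {n x : ℕ} {o : Option ℕ} (hx : x ∈ Set.Icc 1 n)
    (ho : ∀ y ∈ o, y ∈ Set.Icc 1 n) : CP n (pointMap x o) := by
  refine ⟨fun z y h => ?_, fun z w a b hz hw => ?_⟩
  · by_cases hzx : z = x
    · subst hzx
      simp only [pointMap, if_true] at h
      exact ⟨hx, ho y h⟩
    · simp [pointMap, hzx] at h
  · by_cases hzx : z = x <;> by_cases hwx : w = x <;> simp_all [pointMap]

theorem RStar.bind_eq_bind_iff {n : ℕ} {α β : ℕ → Option ℕ} (h : RStar (CP n) α β) {x : ℕ}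
    (hx : x ∈ Set.Icc 1 n) {o₁ o₂ : Option ℕ} (ho₁ : ∀ y ∈ o₁, y ∈ Set.Icc 1 n)
    (ho₂ : ∀ y ∈ o₂, y ∈ Set.Icc 1 n) :
    o₁.bind α = o₂.bind α ↔ o₁.bind β = o₂.bind β := by
  simpa only [pcomp_pointMap, (pointMap_injective x).eq_iff] using
    h _ _ (cp_pointMap hx ho₁) (cp_pointMap hx ho₂)

theorem RStar.ker_eq {n : ℕ} {α β : ℕ → Option ℕ} (hα : IsPT n α) (hβ : IsPT n β)
    (h : RStar (CP n) α β) : Setoid.ker α = Setoid.ker β := by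
  have key : ∀ x ∈ Set.Icc 1 n, ∀ y, α x = α y ↔ β x = β y := by
    intro x hx y
    by_cases hy : y ∈ Set.Icc 1 n
    · exact h.bind_eq_bind_iff hx (o₁ := some x) (o₂ := some y) (by simpa) (by simpa)
    · rw [hα.apply_eq_none hy, hβ.apply_eq_none hy]
      exact h.bind_eq_bind_iff hx (o₁ := some x) (o₂ := none) (by simpa) (by simp)
  ext x y
  simp only [Setoid.ker_def]
  by_cases hx : x ∈ Set.Icc 1 n
  · exact key x hx y
  by_cases hy : y ∈ Set.Icc 1 n
  · rw [eq_comm, key y hy x, eq_comm]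
  · simp [hα.apply_eq_none hx, hα.apply_eq_none hy, hβ.apply_eq_none hx, hβ.apply_eq_none hy]

theorem ncard_range_eq_of_ker_eq {X Y Z : Type*} {f : X → Y} {g : X → Z}
    (h : Setoid.ker f = Setoid.ker g) : (Set.range f).ncard = (Set.range g).ncard := by
  rw [← Nat.card_coe_set_eq, ← Nat.card_coe_set_eq,
    ← Nat.card_congr (Setoid.quotientKerEquivRange f), h,
    Nat.card_congr (Setoid.quotientKerEquivRange g)]

theorem IsPT.ncard_range {n : ℕ} {α : ℕ → Option ℕ} (hα : IsPT n α) :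
    (Set.range α).ncard = (img α).ncard + 1 := by
  have hrange : Set.range α = insert none (some '' img α) := by
    ext (_ | y)
    · exact iff_of_true ⟨0, hα.apply_eq_none (by simp)⟩ (Set.mem_insert _ _)
    · simp [img]
  have hfin : (some '' img α).Finite := hα.img_finite.image _
  rw [hrange, Set.ncard_insert_of_notMem (by simp) hfin,
    Set.ncard_image_of_injective _ (Option.some_injective _)]

theorem ncard_img_eq_of_ker_eq {n : ℕ} {α β : ℕ → Option ℕ} (hα : IsPT n α) (hβ : IsPT n β)
    (h : Setoid.ker α = Setoid.ker β) : (img α).ncard = (img β).ncard := by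
  have := ncard_range_eq_of_ker_eq h
  rw [hα.ncard_range, hβ.ncard_range] at this
  omega

theorem Nat.dist_count_le (p : ℕ → Prop) [DecidablePred p] (x y : ℕ) :
    Nat.dist (Nat.count p x) (Nat.count p y) ≤ Nat.dist x y := by
  wlog hxy : x ≤ y generalizing x y
  · rw [Nat.dist_comm, Nat.dist_comm x]
    exact this y x (by omega)
  obtain ⟨k, rfl⟩ := Nat.exists_eq_add_of_le hxy
  rw [Nat.count_add, Nat.dist_eq_sub_of_le (by omega), Nat.dist_eq_sub_of_le hxy]
  have := Nat.count_le (p := fun i => p (x + i)) (n := k)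
  omega

open Classical in
-- `Nat.count (· ∈ A) x` is the number of elements of `A` below `x`, so `x ∈ A` goes to its rank
-- in `A`, counting from `1`.
noncomputable def rankMap (A : Set ℕ) : ℕ → Option ℕ :=
  fun x => if x ∈ A then some (Nat.count (· ∈ A) x + 1) else none

section rankMap

open Classical

theorem rankMap_eq_some {A : Set ℕ} {x y : ℕ} :
    rankMap A x = some y ↔ x ∈ A ∧ Nat.count (· ∈ A) x + 1 = y := by
  unfold rankMap
  split_ifs with h <;> simp [h]

theorem img_rankMap {A : Set ℕ} (hA : A.Finite) : img (rankMap A) = Set.Icc 1 A.ncard := by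
  rw [Set.ncard_eq_toFinset_card A hA]
  ext y
  simp only [img, rankMap_eq_some, Set.mem_ofPred_eq, Set.mem_Icc]
  constructor
  · rintro ⟨x, hx, rfl⟩
    have := Nat.count_lt_card (p := (· ∈ A)) hA hx
    omega
  · rintro ⟨hy₁, hy₂⟩
    exact ⟨Nat.nth (· ∈ A) (y - 1), Nat.nth_mem_of_lt_card (p := (· ∈ A)) hA (by omega),
      by rw [Nat.count_nth_of_lt_card_finite (p := (· ∈ A)) hA (by omega)]; omega⟩

theorem cp_rankMap {n : ℕ} {A : Set ℕ} (hA : A ⊆ Set.Icc 1 n) : CP n (rankMap A) := by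
  have hAfin : A.Finite := (Set.finite_Icc 1 n).subset hA
  have hcard : A.ncard ≤ n := by
    simpa using Set.ncard_le_ncard hA (Set.finite_Icc 1 n)
  refine ⟨fun x y h => ⟨hA (rankMap_eq_some.mp h).1, ?_⟩, fun x y a b hx hy => ?_⟩
  · have := (img_rankMap hAfin).subset ⟨x, h⟩
    exact ⟨this.1, this.2.trans hcard⟩
  · obtain ⟨-, rfl⟩ := rankMap_eq_some.mp hx
    obtain ⟨-, rfl⟩ := rankMap_eq_some.mp hy
    rw [Nat.dist_add_add_right]
    exact Nat.dist_count_le _ x y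

theorem RStar.partialId_rankMap (S : (ℕ → Option ℕ) → Prop) (A : Set ℕ) :
    RStar S (partialId A) (rankMap A) := by
  refine RStar.of_pcomp_eq S (σ := rankMap A) (τ := fun k => some (Nat.nth (· ∈ A) (k - 1)))
    ?_ ?_ <;> funext x <;> by_cases hx : x ∈ A <;> simp [pcomp, partialId, rankMap, hx]

end rankMap

namespace DStar

variable {S : (ℕ → Option ℕ) → Prop} {α β γ : ℕ → Option ℕ}

theorem of_lstar (hα : S α) (hβ : S β) (h : LStar S α β) : DStar S α β :=
  .rel _ _ ⟨hα, hβ, .inl h⟩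

theorem of_rstar (hα : S α) (hβ : S β) (h : RStar S α β) : DStar S α β :=
  .rel _ _ ⟨hα, hβ, .inr h⟩

theorem symm (h : DStar S α β) : DStar S β α :=
  Relation.EqvGen.symm _ _ h

theorem trans (h₁ : DStar S α β) (h₂ : DStar S β γ) : DStar S α γ :=
  Relation.EqvGen.trans _ _ _ h₁ h₂

theorem ncard_img_eq {n : ℕ} (h : DStar (CP n) α β) : (img α).ncard = (img β).ncard := by
  induction h with
  | rel a b hab =>
    obtain ⟨ha, hb, hL | hR⟩ := hab
    · rw [hL.img_eq ha.1 hb.1]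
    · exact ncard_img_eq_of_ker_eq ha.1 hb.1 (hR.ker_eq ha.1 hb.1)
  | refl => rfl
  | symm _ _ _ ih => exact ih.symm
  | trans _ _ _ _ _ ih₁ ih₂ => exact ih₁.trans ih₂

theorem rankMap_img {n : ℕ} (hα : CP n α) : DStar (CP n) α (rankMap (img α)) := by
  have hA := hα.1.img_subset_Icc
  exact (of_lstar hα (cp_partialId hA) (.of_img_eq _ (img_partialId _).symm)).trans
    (of_rstar (cp_partialId hA) (cp_rankMap hA) (.partialId_rankMap _ _))

end DStar

theorem dstar_iff_card_img_eq_CP_general (n : ℕ) (α β : ℕ → Option ℕ)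
    (hα : CP n α) (hβ : CP n β) :
    DStar (CP n) α β ↔ (img α).ncard = (img β).ncard := by
  refine ⟨DStar.ncard_img_eq, fun h => ?_⟩
  have himg : img (rankMap (img α)) = img (rankMap (img β)) := by
    rw [img_rankMap hα.1.img_finite, img_rankMap hβ.1.img_finite, h]
  exact (DStar.rankMap_img hα).trans <|
    (DStar.of_lstar (cp_rankMap hα.1.img_subset_Icc) (cp_rankMap hβ.1.img_subset_Icc)
      (.of_img_eq _ himg)).trans (DStar.rankMap_img hβ).symm

/-- Theorem 2.1(iv) for `CP n`: `α D* β` iff `|im α| = |im β|`. -/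
theorem dstar_iff_card_img_eq_CP (n : ℕ) (hn : 0 < n) (α β : ℕ → Option ℕ)
    (hα : CP n α) (hβ : CP n β) :
    DStar (CP n) α β ↔ (img α).ncard = (img β).ncard :=
  dstar_iff_card_img_eq_CP_general n α β hα hβ
end

section
/- For every positive integer n, the semigroup CP_n is left abundant: for every α ∈ CP_n there exists an idempotent ε ∈ CP_n (i.e., εε = ε) such that α L* ε. -/
/-- `CP n` is left abundant: every `L*`-class contains an idempotent. -/
theorem CP_left_abundant (n : ℕ) (hn : 0 < n) (α : ℕ → Option ℕ) (hα : CP n α) :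
    ∃ ε : ℕ → Option ℕ, CP n ε ∧ pcomp ε ε = ε ∧ LStar (CP n) α ε := by
  classical
  refine ⟨fun x => if x ∈ img α then some x else none, ⟨?_, ?_⟩, ?_, ?_⟩
  · intro x y h
    by_cases hx : x ∈ img α
    · simp only [if_pos hx] at h
      obtain ⟨w, hw⟩ := hx
      have := (hα.1 w x hw).2
      cases h
      exact ⟨this, this⟩
    · simp [if_neg hx] at h
  · intro x y a b hx hy
    by_cases h1 : x ∈ img α
    · by_cases h2 : y ∈ img α
      · simp only [if_pos h1] at hx
        simp only [if_pos h2] at hy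
        cases hx; cases hy; exact le_refl _
      · simp [if_neg h2] at hy
    · simp [if_neg h1] at hx
  · funext x
    by_cases hx : x ∈ img α
    · simp [pcomp, if_pos hx]
    · simp [pcomp, if_neg hx]
  · intro γ δ _ _
    constructor
    · intro h
      funext x
      by_cases hx : x ∈ img α
      · obtain ⟨w, hw⟩ := hx
        have hw2 : pcomp α γ w = pcomp α δ w := by rw [h]
        simp only [pcomp, hw] at hw2
        have hx' : x ∈ img α := ⟨w, hw⟩
        simp only [pcomp]
        rw [if_pos hx']
        simpa using hw2
      · simp [pcomp, if_neg hx]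
    · intro h
      funext w
      simp only [pcomp]
      cases hαw : α w with
      | none => rfl
      | some y =>
        have hy : y ∈ img α := ⟨w, hαw⟩
        have := congrFun h y
        simp only [pcomp, if_pos hy] at this
        simpa using this
end

section
/- For every positive integer n, the semigroup OCP_n is left abundant: for every α ∈ OCP_n there exists an idempotent ε ∈ OCP_n (i.e., εε = ε) such that α L* ε. -/
/-- `OCP n` is left abundant: every `L*`-class contains an idempotent. -/
theorem OCP_left_abundant (n : ℕ) (hn : 0 < n) (α : ℕ → Option ℕ) (hα : OCP n α) :
    ∃ ε : ℕ → Option ℕ, OCP n ε ∧ pcomp ε ε = ε ∧ LStar (OCP n) α ε := by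
  classical
  set ε : ℕ → Option ℕ := fun x => if ∃ z, α z = some x then some x else none with hε
  have hεval : ∀ x y, ε x = some y → y = x ∧ ∃ z, α z = some x := by
    intro x y h
    simp only [hε] at h
    split at h
    · exact ⟨(Option.some_inj.mp h).symm, by assumption⟩
    · simp at h
  have hεmem : ∀ x, (∃ z, α z = some x) → ε x = some x := by
    intro x hx; simp only [hε]; rw [if_pos hx]
  refine ⟨ε, ⟨⟨?_, ?_⟩, ?_⟩, ?_, ?_⟩
  · intro x y h
    obtain ⟨rfl, z, hz⟩ := hεval x y h
    have := hα.1.1 z y hz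
    exact ⟨this.2, this.2⟩
  · intro x y a b ha hb
    obtain ⟨rfl, -⟩ := hεval x a ha
    obtain ⟨rfl, -⟩ := hεval y b hb
    exact le_refl _
  · intro x y a b ha hb hxy
    obtain ⟨rfl, -⟩ := hεval x a ha
    obtain ⟨rfl, -⟩ := hεval y b hb
    exact hxy
  · funext x
    simp only [pcomp, hε]
    split
    · rename_i h; simp [h]
    · rfl
  · intro γ δ hγ hδ
    have key : ∀ f g : ℕ → Option ℕ,
        (pcomp α f = pcomp α g ↔ ∀ y, (∃ z, α z = some y) → f y = g y) := by
      intro f g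
      constructor
      · intro h y ⟨z, hz⟩
        have := congrFun h z
        simpa [pcomp, hz] using this
      · intro h
        funext x
        simp only [pcomp]
        cases hx : α x with
        | none => rfl
        | some y => simpa using h y ⟨x, hx⟩
    have key2 : ∀ f g : ℕ → Option ℕ,
        (pcomp ε f = pcomp ε g ↔ ∀ y, (∃ z, α z = some y) → f y = g y) := by
      intro f g
      constructor
      · intro h y hy
        have := congrFun h y
        simpa [pcomp, hεmem y hy] using this
      · intro h
        funext x
        simp only [pcomp, hε]
        split
        · simpa using h x (by assumption)
        · rfl
    rw [key γ δ, key2 γ δ]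
end

section
/- For every positive integer n, the semigroup ORCP_n is left abundant: for every α ∈ ORCP_n there exists an idempotent ε ∈ ORCP_n (i.e., εε = ε) such that α L* ε. -/
/-- `ORCP n` is left abundant: every `L*`-class contains an idempotent. -/
theorem ORCP_left_abundant (n : ℕ) (hn : 0 < n) (α : ℕ → Option ℕ) (hα : ORCP n α) :
    ∃ ε : ℕ → Option ℕ, ORCP n ε ∧ pcomp ε ε = ε ∧ LStar (ORCP n) α ε := by
  classical
  set ε : ℕ → Option ℕ := fun x => if ∃ y, α y = some x then some x else none with hε
  have hεspec : ∀ x a, ε x = some a → a = x ∧ ∃ y, α y = some x := by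
    intro x a hx
    by_cases h : ∃ y, α y = some x
    · simp only [hε, if_pos h] at hx
      exact ⟨(Option.some_injective _ hx).symm, h⟩
    · simp [hε, if_neg h] at hx
  have hεval : ∀ x, (∃ y, α y = some x) → ε x = some x := by
    intro x h; simp [hε, if_pos h]
  refine ⟨ε, ⟨⟨?_, ?_⟩, Or.inl ?_⟩, ?_, ?_⟩
  · -- IsPT
    intro x y hxy
    obtain ⟨rfl, z, hz⟩ := hεspec x y hxy
    have := (hα.1.1 z y hz).2
    exact ⟨this, this⟩
  · -- contraction
    intro x y a b ha hb
    rw [(hεspec x a ha).1, (hεspec y b hb).1]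
  · -- order preserving
    intro x y a b ha hb hxy
    rw [(hεspec x a ha).1, (hεspec y b hb).1]; exact hxy
  · -- idempotent
    funext x
    by_cases h : ∃ y, α y = some x
    · rw [pcomp, hεval x h]; exact hεval x h
    · simp [pcomp, hε, if_neg h]
  · -- LStar
    intro γ δ _ _
    have key : ∀ β : ℕ → Option ℕ, (pcomp β γ = pcomp β δ) ↔ ∀ z, (∃ x, β x = some z) → γ z = δ z := by
      intro β
      constructor
      · rintro h z ⟨x, hx⟩
        have := congrFun h x
        simpa [pcomp, hx] using this
      · intro h
        funext x
        cases hx : β x with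
        | none => simp [pcomp, hx]
        | some z => simpa [pcomp, hx] using h z ⟨x, hx⟩
    rw [key α, key ε]
    constructor
    · rintro h z ⟨x, hx⟩
      obtain ⟨rfl, hz⟩ := hεspec x z hx
      exact h z hz
    · intro h z hz
      exact h z ⟨z, hεval z hz⟩
end

section
/- For every integer n ≥ 4, the semigroup CP_n is not right abundant: there exists α ∈ CP_n such that no idempotent ε ∈ CP_n (i.e., εε = ε) satisfies α R* ε. -/
def myA : ℕ → Option ℕ := fun x =>
  if x = 1 then some 1 else if x = 2 then some 2 else if x = 3 then some 2
  else if x = 4 then some 3 else none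

lemma myA_eq (x a : ℕ) (h : myA x = some a) :
    (x=1∧a=1)∨(x=2∧a=2)∨(x=3∧a=2)∨(x=4∧a=3) := by
  unfold myA at h; split_ifs at h <;> simp_all

def pt (y : ℕ) : ℕ → Option ℕ := fun x => if x = 1 then some y else none

lemma pt_CP (n y : ℕ) (h1 : 1 ≤ y) (h2 : y ≤ n) (hn : 1 ≤ n) : CP n (pt y) := by
  constructor
  · intro x z hx
    unfold pt at hx; split_ifs at hx with hx1
    · cases hx; exact ⟨by simp [hx1, hn], by simp [h1, h2]⟩
  · intro x z a b hx hz
    unfold pt at hx hz; split_ifs at hx hz; cases hx; cases hz; simp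

lemma pt_comp_eq_iff (y z : ℕ) (α : ℕ → Option ℕ) :
    pcomp (pt y) α = pcomp (pt z) α ↔ α y = α z := by
  constructor
  · intro h
    have := congrFun h 1
    simpa [pcomp, pt] using this
  · intro h; funext x
    by_cases hx : x = 1 <;> simp [pcomp, pt, hx, h]

lemma pt_comp_none_iff (y : ℕ) (α : ℕ → Option ℕ) :
    pcomp (pt y) α = pcomp (fun _ => none) α ↔ α y = none := by
  constructor
  · intro h
    have := congrFun h 1
    simpa [pcomp, pt] using this
  · intro h; funext x
    by_cases hx : x = 1 <;> simp [pcomp, pt, hx, h]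

/-- For `n ≥ 4`, `CP n` is not right abundant: some `R*`-class has no idempotent. -/
theorem CP_not_right_abundant (n : ℕ) (hn : 4 ≤ n) :
    ∃ α : ℕ → Option ℕ, CP n α ∧
      ∀ ε : ℕ → Option ℕ, CP n ε → pcomp ε ε = ε → ¬ RStar (CP n) α ε := by
  have hn1 : 1 ≤ n := by omega
  refine ⟨myA, ⟨?_, ?_⟩, ?_⟩
  · intro x y hx
    rcases myA_eq x y hx with ⟨h1,h2⟩|⟨h1,h2⟩|⟨h1,h2⟩|⟨h1,h2⟩ <;>
      subst h1 <;> subst h2 <;> constructor <;> simp [Set.mem_Icc] <;> omega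
  · intro x y a b hx hy
    rcases myA_eq x a hx with ⟨h1,h2⟩|⟨h1,h2⟩|⟨h1,h2⟩|⟨h1,h2⟩ <;>
    rcases myA_eq y b hy with ⟨h3,h4⟩|⟨h3,h4⟩|⟨h3,h4⟩|⟨h3,h4⟩ <;>
      subst h1 <;> subst h2 <;> subst h3 <;> subst h4 <;> simp [Nat.dist] <;> omega
  · intro ε hε hid h
    have hker : ∀ y z, 1 ≤ y → y ≤ n → 1 ≤ z → z ≤ n → (myA y = myA z ↔ ε y = ε z) := by
      intro y z hy1 hy2 hz1 hz2
      have := h (pt y) (pt z) (pt_CP n y hy1 hy2 hn1) (pt_CP n z hz1 hz2 hn1)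
      rw [pt_comp_eq_iff, pt_comp_eq_iff] at this
      exact this
    have hdom : ∀ y, 1 ≤ y → y ≤ n → (myA y = none ↔ ε y = none) := by
      intro y hy1 hy2
      have := h (pt y) (fun _ => none) (pt_CP n y hy1 hy2 hn1) (empty_CP n)
      rw [pt_comp_none_iff, pt_comp_none_iff] at this
      exact this
    -- ε 2 is defined
    have hd2 : ε 2 ≠ none := by
      intro hc
      have := (hdom 2 (by omega) (by omega)).mpr hc
      simp [myA] at this
    have hd1 : ε 1 ≠ none := by
      intro hc
      have := (hdom 1 (by omega) (by omega)).mpr hc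
      simp [myA] at this
    have hd4 : ε 4 ≠ none := by
      intro hc
      have := (hdom 4 (by omega) (by omega)).mpr hc
      simp [myA] at this
    obtain ⟨t, ht⟩ : ∃ t, ε 2 = some t := Option.ne_none_iff_exists'.mp hd2
    obtain ⟨s, hs⟩ : ∃ s, ε 1 = some s := Option.ne_none_iff_exists'.mp hd1
    obtain ⟨u, hu⟩ : ∃ u, ε 4 = some u := Option.ne_none_iff_exists'.mp hd4
    -- idempotency: ε fixes its image
    have hfix : ∀ x v, ε x = some v → ε v = some v := by
      intro x v hx
      have := congrFun hid x
      rw [pcomp] at this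
      rw [hx] at this
      simpa using this
    have hbd : ∀ x v, ε x = some v → 1 ≤ v ∧ v ≤ n := by
      intro x v hx
      have := (hε.1 x v hx).2
      simpa [Set.mem_Icc] using this
    -- t ∈ {2,3}
    have htmem : t = 2 ∨ t = 3 := by
      obtain ⟨ht1, ht2⟩ := hbd 2 t ht
      have het : ε t = ε 2 := by rw [hfix 2 t ht, ht]
      have := (hker t 2 ht1 ht2 (by omega) (by omega)).mpr het
      rcases myA_eq t 2 (by rw [this]; simp [myA]) with ⟨h1,_⟩|⟨h1,_⟩|⟨h1,_⟩|⟨h1,h2⟩ <;>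
        first | (exact Or.inl h1) | (exact Or.inr h1) | simp_all
    -- s = 1
    have hs1 : s = 1 := by
      obtain ⟨hs1', hs2⟩ := hbd 1 s hs
      have hes : ε s = ε 1 := by rw [hfix 1 s hs, hs]
      have := (hker s 1 hs1' hs2 (by omega) (by omega)).mpr hes
      rcases myA_eq s 1 (by rw [this]; simp [myA]) with ⟨h1,_⟩|⟨_,h2⟩|⟨_,h2⟩|⟨_,h2⟩ <;>
        first | exact h1 | simp_all
    -- u = 4
    have hu4 : u = 4 := by
      obtain ⟨hu1, hu2⟩ := hbd 4 u hu
      have heu : ε u = ε 4 := by rw [hfix 4 u hu, hu]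
      have := (hker u 4 hu1 hu2 (by omega) (by omega)).mpr heu
      rcases myA_eq u 3 (by rw [this]; simp [myA]) with ⟨_,h2⟩|⟨_,h2⟩|⟨_,h2⟩|⟨h1,_⟩ <;>
        first | exact h1 | simp_all
    -- ε 3 = ε 2
    have he3 : ε 3 = some t := by
      have := (hker 2 3 (by omega) (by omega) (by omega) (by omega)).mp (by simp [myA])
      rw [← this, ht]
    subst hs1; subst hu4
    have c1 := hε.2 3 4 t 4 he3 hu
    have c2 := hε.2 1 2 1 t hs ht
    rcases htmem with h1 | h1 <;> subst h1 <;> simp [Nat.dist] at c1 c2 <;> omega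
end

section
/- For every integer n ≥ 4, the semigroup ORCP_n is not right abundant: there exists α ∈ ORCP_n such that no idempotent ε ∈ ORCP_n (i.e., εε = ε) satisfies α R* ε. -/
/-!
Two maps `α` and `ε` with `α R* ε` in `ORCP n` have the same domain and the same kernel: test
them against the one-point partial identity `{x ↦ x}` versus the empty map, and against
`{x ↦ x, y ↦ y}` versus `{x ↦ x, y ↦ x}`. Take `α = (1 ↦ 1, 2 ↦ 2, 3 ↦ 2, 4 ↦ 3)`, with kernel
classes `{1}, {2, 3}, {4}`. An idempotent `ε` fixes its image, and an image point `ε x` lies in the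
kernel class of `x`; so `ε` would fix `1` and `4` and send `2` and `3` to a common value `b`.
Being a contraction, `ε` forces `|1 - b| ≤ 1` and `|b - 4| ≤ 1`, which is impossible.
-/

def onePoint (x u : ℕ) : ℕ → Option ℕ := fun z => if z = x then some u else none

def twoPoint (x y u v : ℕ) : ℕ → Option ℕ :=
  fun z => if z = x then some u else if z = y then some v else none

section

variable {n : ℕ} {α β : ℕ → Option ℕ}

lemma orcp_of_isPT_of_monotone_contracting (hpt : IsPT n α)
    (h : ∀ x y a b, α x = some a → α y = some b → x ≤ y → a ≤ b ∧ b ≤ a + (y - x)) :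
    ORCP n α := by
  refine ⟨⟨hpt, fun x y a b hx hy => ?_⟩, Or.inl fun x y a b hx hy hxy => (h x y a b hx hy hxy).1⟩
  rcases le_total x y with hxy | hyx
  · have := h x y a b hx hy hxy
    simp only [Nat.dist]
    omega
  · have := h y x b a hy hx hyx
    simp only [Nat.dist]
    omega

lemma orcp_empty : ORCP n fun _ => none :=
  orcp_of_isPT_of_monotone_contracting (by simp [IsPT]) (by simp)

lemma orcp_onePoint {x : ℕ} (hx : x ∈ Set.Icc 1 n) : ORCP n (onePoint x x) := by
  refine orcp_of_isPT_of_monotone_contracting (fun z w h => ?_) fun z w a b hz hw _ => ?_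
  all_goals simp only [onePoint] at *; split_ifs at *; simp_all

lemma orcp_twoPoint {x y v : ℕ} (hx : x ∈ Set.Icc 1 n) (hy : y ∈ Set.Icc 1 n) (hv : v = x ∨ v = y) :
    ORCP n (twoPoint x y x v) := by
  refine orcp_of_isPT_of_monotone_contracting (fun z w h => ?_) fun z w a b hz hw hzw => ?_
  all_goals simp only [twoPoint, Set.mem_Icc] at *; split_ifs at * <;> simp_all <;> omega

lemma pcomp_onePoint_eq_empty_iff {x : ℕ} :
    pcomp (onePoint x x) β = pcomp (fun _ => none) β ↔ β x = none := by
  refine ⟨fun h => by simpa [pcomp, onePoint] using congrFun h x, fun h => funext fun z => ?_⟩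
  by_cases hz : z = x <;> simp [pcomp, onePoint, hz, h]

lemma pcomp_twoPoint_eq_iff {x y : ℕ} :
    pcomp (twoPoint x y x y) β = pcomp (twoPoint x y x x) β ↔ β y = β x := by
  by_cases hyx : y = x
  · subst hyx
    simp
  refine ⟨fun h => by simpa [pcomp, twoPoint, hyx] using congrFun h y, fun h => funext fun z => ?_⟩
  simp only [pcomp, twoPoint]
  split_ifs <;> simp_all

lemma RStar.eq_none_iff (hR : RStar (ORCP n) α β) {x : ℕ} (hx : x ∈ Set.Icc 1 n) :
    α x = none ↔ β x = none := by
  simpa only [pcomp_onePoint_eq_empty_iff] using hR _ _ (orcp_onePoint hx) orcp_empty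

lemma RStar.apply_eq_apply_iff (hR : RStar (ORCP n) α β) {x y : ℕ} (hx : x ∈ Set.Icc 1 n)
    (hy : y ∈ Set.Icc 1 n) : α y = α x ↔ β y = β x := by
  simpa only [pcomp_twoPoint_eq_iff] using
    hR _ _ (orcp_twoPoint hx hy (Or.inr rfl)) (orcp_twoPoint hx hy (Or.inl rfl))

lemma apply_eq_some_self_of_idempotent (hidem : pcomp β β = β) {x a : ℕ} (h : β x = some a) :
    β a = some a := by
  simpa [pcomp, h] using congrFun hidem x

lemma RStar.apply_eq_of_idempotent (hR : RStar (ORCP n) α β) (hβ : IsPT n β)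
    (hidem : pcomp β β = β) {x a : ℕ} (h : β x = some a) : α a = α x :=
  (hR.apply_eq_apply_iff (hβ x a h).1 (hβ x a h).2).2
    (by rw [apply_eq_some_self_of_idempotent hidem h, h])

end

def orcpWitness : ℕ → Option ℕ := fun x =>
  if x = 1 then some 1 else if x = 2 then some 2 else if x = 3 then some 2
  else if x = 4 then some 3 else none

lemma orcp_orcpWitness {n : ℕ} (hn : 4 ≤ n) : ORCP n orcpWitness := by
  refine orcp_of_isPT_of_monotone_contracting (fun x y h => ?_) fun x y a b hx hy hxy => ?_
  all_goals simp only [orcpWitness, Set.mem_Icc] at *; split_ifs at * <;> simp_all <;> omega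

lemma orcpWitness_ne_none {x : ℕ} (hx : x ∈ Set.Icc 1 4) : orcpWitness x ≠ none := by
  simp only [orcpWitness, Set.mem_Icc] at *
  split_ifs <;> simp only [ne_eq, reduceCtorEq, not_false_eq_true]
  omega

lemma eq_of_orcpWitness_eq {a x : ℕ} (h : orcpWitness a = orcpWitness x) (hx : x = 1 ∨ x = 4) :
    a = x := by
  rcases hx with rfl | rfl <;>
  · simp only [orcpWitness] at h
    split_ifs at h <;> simp_all

/-- For `n ≥ 4`, `ORCP n` is not right abundant: some `R*`-class has no idempotent. -/
theorem ORCP_not_right_abundant (n : ℕ) (hn : 4 ≤ n) :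
    ∃ α : ℕ → Option ℕ, ORCP n α ∧
      ∀ ε : ℕ → Option ℕ, ORCP n ε → pcomp ε ε = ε → ¬ RStar (ORCP n) α ε := by
  refine ⟨orcpWitness, orcp_orcpWitness hn, fun ε hε hidem hR => ?_⟩
  have hIcc : ∀ x ∈ Set.Icc 1 4, x ∈ Set.Icc 1 n := fun x hx => ⟨hx.1, hx.2.trans hn⟩
  have hdom : ∀ x ∈ Set.Icc 1 4, ∃ a, ε x = some a := fun x hx =>
    Option.ne_none_iff_exists'.mp ((hR.eq_none_iff (hIcc x hx)).not.mp (orcpWitness_ne_none hx))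
  obtain ⟨a, ha⟩ := hdom 1 (by simp)
  obtain ⟨b, hb⟩ := hdom 2 (by simp)
  obtain ⟨c, hc⟩ := hdom 4 (by simp)
  have hb3 : ε 3 = some b :=
    hb ▸ (hR.apply_eq_apply_iff (hIcc 2 (by simp)) (hIcc 3 (by simp))).1 rfl
  obtain rfl : a = 1 := eq_of_orcpWitness_eq (hR.apply_eq_of_idempotent hε.1.1 hidem ha) (.inl rfl)
  obtain rfl : c = 4 := eq_of_orcpWitness_eq (hR.apply_eq_of_idempotent hε.1.1 hidem hc) (.inr rfl)
  have h12 : Nat.dist 1 b ≤ Nat.dist 1 2 := hε.1.2 1 2 1 b ha hb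
  have h34 : Nat.dist b 4 ≤ Nat.dist 3 4 := hε.1.2 3 4 b 4 hb3 hc
  simp only [Nat.dist] at h12 h34
  omega
end

section
/- Let n ≥ 4 and let α ∈ CP_n be a partial contraction whose kernel partition Ker α consists of classes A_1, A_2, …, A_p with 3 ≤ p ≤ n, such that every element of A_i is strictly less than every element of A_j whenever i < j, and suppose there exists k with 2 ≤ k ≤ p−1 and |A_k| ≥ 2. Then Ker α has no relatively convex transversal. -/
/-- Lemma 1.3 of the paper: if the kernel classes `A 0 < A 1 < … < A (p-1)`
(`3 ≤ p ≤ n`, `n ≥ 4`) of `α ∈ CP n` are totally ordered and some inner class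
has at least two elements, then `Ker α` has no relatively convex transversal.
(The class indexed `k : Fin p` is `A_{k+1}` of the paper, so the condition
`2 ≤ k+1 ≤ p-1` reads `1 ≤ k ∧ k ≤ p-2`.) -/
theorem no_relatively_convex_transversal (n : ℕ) (hn : 4 ≤ n)
    (α : ℕ → Option ℕ) (hα : CP n α) (p : ℕ) (hp3 : 3 ≤ p) (hpn : p ≤ n)
    (A : Fin p → Set ℕ)
    (hclass : ∀ i, ∃ v, (∃ x, α x = some v) ∧ A i = {x | α x = some v})
    (hcover : ∀ v, (∃ x, α x = some v) → ∃ i, A i = {x | α x = some v})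
    (hord : ∀ i j : Fin p, i < j → ∀ x ∈ A i, ∀ y ∈ A j, x < y)
    (hk : ∃ k : Fin p, 1 ≤ (k : ℕ) ∧ (k : ℕ) ≤ p - 2 ∧ 2 ≤ (A k).ncard) :
    ¬ ∃ T : Set ℕ,
        ((∀ t ∈ T, α t ≠ none) ∧ (∀ i, ∃! t, t ∈ T ∧ t ∈ A i)) ∧
        (∀ x ∈ T, ∀ y ∈ T, x ≤ y →
          ∀ z, α z ≠ none → x ≤ z → z ≤ y → z ∈ T) := by
  rintro ⟨T, ⟨hdom, huniq⟩, hconv⟩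
  obtain ⟨k, hk1, hk2, hcard⟩ := hk
  -- two distinct elements of A k
  have hfin : (A k).Finite := by
    by_contra h
    rw [Set.Infinite.ncard h] at hcard; omega
  obtain ⟨a, b, ha, hb, hab⟩ := Set.one_lt_ncard_iff hfin |>.mp (by omega)
  -- neighbouring indices
  have hklt : (k : ℕ) < p := k.isLt
  set i : Fin p := ⟨(k : ℕ) - 1, by omega⟩
  set j : Fin p := ⟨(k : ℕ) + 1, by omega⟩
  have hik : i < k := by
    simp only [Fin.lt_def, i]; omega
  have hkj : k < j := by
    simp only [Fin.lt_def, j]; omega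
  obtain ⟨x, ⟨hxT, hxA⟩, -⟩ := huniq i
  obtain ⟨y, ⟨hyT, hyA⟩, -⟩ := huniq j
  -- a, b are in dom α
  obtain ⟨v, -, hAk⟩ := hclass k
  have hav : α a = some v := by rw [hAk] at ha; exact ha
  have hbv : α b = some v := by rw [hAk] at hb; exact hb
  have hxa : x < a := hord i k hik x hxA a ha
  have hay : a < y := hord k j hkj a ha y hyA
  have hxb : x < b := hord i k hik x hxA b hb
  have hby : b < y := hord k j hkj b hb y hyA
  have haT : a ∈ T := hconv x hxT y hyT (by omega) a (by simp [hav]) hxa.le hay.le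
  have hbT : b ∈ T := hconv x hxT y hyT (by omega) b (by simp [hbv]) hxb.le hby.le
  obtain ⟨t, -, htuniq⟩ := huniq k
  exact hab ((htuniq a ⟨haT, ha⟩).trans (htuniq b ⟨hbT, hb⟩).symm)
end

section
/- There exist elements α and β of ORCP_3, each regular in ORCP_3, such that their product αβ is not regular in ORCP_3. (For instance α with dom α = {1,3}, 1α = 1, 3α = 3, and β with dom β = {1,2,3}, 1β = 1, 2β = 2, 3β = 2.) -/
/-- `α` is a regular element of the class `S`: there is `β ∈ S` with `αβα = α`. -/
def RegularIn (S : (ℕ → Option ℕ) → Prop) (α : ℕ → Option ℕ) : Prop :=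
  ∃ β, S β ∧ pcomp (pcomp α β) α = α


/-! Idempotents are regular, and both factors are idempotent. Their product sends `1 ↦ 1`, `3 ↦ 2`:
it is injective and shrinks the distance `2` between `1` and `3` to `1`. Any `γ` with
`(αβ) γ (αβ) = αβ` must invert it on its image, sending `1 ↦ 1`, `2 ↦ 3`, which stretches
distances and so is not a contraction. -/

lemma regularIn_of_pcomp_self {S : (ℕ → Option ℕ) → Prop} {e : ℕ → Option ℕ} (hS : S e)
    (he : pcomp e e = e) : RegularIn S e :=
  ⟨e, hS, by rw [he, he]⟩

lemma pcomp_self_of_fixes_image {e : ℕ → Option ℕ} (h : ∀ x a, e x = some a → e a = some a) :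
    pcomp e e = e := by
  funext x
  cases hx : e x with
  | none => simp [pcomp, hx]
  | some a => simp [pcomp, hx, h x a hx]

lemma exists_preimage_of_pcomp_pcomp_eq {α γ : ℕ → Option ℕ} (h : pcomp (pcomp α γ) α = α)
    {x a : ℕ} (hx : α x = some a) : ∃ z, γ a = some z ∧ α z = some a := by
  have hxa := congrFun h x
  simp only [pcomp, hx, Option.bind_some] at hxa
  exact Option.bind_eq_some_iff.mp hxa

lemma not_regularIn_of_injOn_of_dist_lt {S : (ℕ → Option ℕ) → Prop}
    (hS : ∀ γ, S γ → IsContraction γ) {α : ℕ → Option ℕ}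
    (hinj : Set.InjOn α {x | α x ≠ none}) {x y a b : ℕ} (hx : α x = some a)
    (hy : α y = some b) (hlt : Nat.dist a b < Nat.dist x y) : ¬ RegularIn S α := by
  rintro ⟨γ, hγ, h⟩
  obtain ⟨x', hγx, hx'⟩ := exists_preimage_of_pcomp_pcomp_eq h hx
  obtain ⟨y', hγy, hy'⟩ := exists_preimage_of_pcomp_pcomp_eq h hy
  have hxx' : x' = x := hinj (by simp [hx']) (by simp [hx]) (hx'.trans hx.symm)
  have hyy' : y' = y := hinj (by simp [hy']) (by simp [hy]) (hy'.trans hy.symm)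
  subst hxx' hyy'
  exact (hlt.trans_le (hS γ hγ a b x' y' hγx hγy)).false

/-- The finite partial transformation with graph `l`; if `l` repeats a first coordinate,
the first such pair wins. -/
def ptOfGraph (l : List (ℕ × ℕ)) : ℕ → Option ℕ := fun x => l.lookup x

section ptOfGraph

variable {l : List (ℕ × ℕ)}

lemma mem_of_ptOfGraph_eq_some {x a : ℕ} (h : ptOfGraph l x = some a) : (x, a) ∈ l := by
  obtain ⟨l₁, l₂, rfl, -⟩ := List.lookup_eq_some_iff.mp h
  simp

lemma ptOfGraph_forall {P : ℕ → ℕ → Prop} (h : ∀ p ∈ l, P p.1 p.2) :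
    ∀ x a, ptOfGraph l x = some a → P x a :=
  fun _ _ hx => h _ (mem_of_ptOfGraph_eq_some hx)

lemma ptOfGraph_forall₂ {P : ℕ → ℕ → ℕ → ℕ → Prop} (h : ∀ p ∈ l, ∀ q ∈ l, P p.1 q.1 p.2 q.2) :
    ∀ x y a b, ptOfGraph l x = some a → ptOfGraph l y = some b → P x y a b :=
  fun _ _ _ _ hx hy => h _ (mem_of_ptOfGraph_eq_some hx) _ (mem_of_ptOfGraph_eq_some hy)

lemma isPT_ptOfGraph {n : ℕ} (h : ∀ p ∈ l, p.1 ∈ Set.Icc 1 n ∧ p.2 ∈ Set.Icc 1 n) :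
    IsPT n (ptOfGraph l) :=
  ptOfGraph_forall h

lemma isContraction_ptOfGraph (h : ∀ p ∈ l, ∀ q ∈ l, Nat.dist p.2 q.2 ≤ Nat.dist p.1 q.1) :
    IsContraction (ptOfGraph l) :=
  ptOfGraph_forall₂ h

lemma isOrderPreserving_ptOfGraph (h : ∀ p ∈ l, ∀ q ∈ l, p.1 ≤ q.1 → p.2 ≤ q.2) :
    IsOrderPreserving (ptOfGraph l) :=
  ptOfGraph_forall₂ h

lemma injOn_ptOfGraph (h : ∀ p ∈ l, ∀ q ∈ l, p.2 = q.2 → p.1 = q.1) :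
    Set.InjOn (ptOfGraph l) {x | ptOfGraph l x ≠ none} := by
  intro x hx y hy hxy
  obtain ⟨a, ha⟩ := Option.ne_none_iff_exists'.mp hx
  exact ptOfGraph_forall₂ (P := fun x y a b => a = b → x = y) h x y a a ha (hxy ▸ ha) rfl

lemma pcomp_ptOfGraph_self (h : ∀ p ∈ l, ptOfGraph l p.2 = some p.2) :
    pcomp (ptOfGraph l) (ptOfGraph l) = ptOfGraph l :=
  pcomp_self_of_fixes_image (ptOfGraph_forall h)

end ptOfGraph

/-- The product of regular elements of `ORCP 3` need not be regular. -/
theorem exists_regular_product_not_regular :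
    ∃ α β : ℕ → Option ℕ, ORCP 3 α ∧ ORCP 3 β ∧
      RegularIn (ORCP 3) α ∧ RegularIn (ORCP 3) β ∧
      ¬ RegularIn (ORCP 3) (pcomp α β) := by
  have hα : ORCP 3 (ptOfGraph [(1, 1), (3, 3)]) :=
    ⟨⟨isPT_ptOfGraph (by decide), isContraction_ptOfGraph (by decide)⟩,
      Or.inl (isOrderPreserving_ptOfGraph (by decide))⟩
  have hβ : ORCP 3 (ptOfGraph [(1, 1), (2, 2), (3, 2)]) :=
    ⟨⟨isPT_ptOfGraph (by decide), isContraction_ptOfGraph (by decide)⟩,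
      Or.inl (isOrderPreserving_ptOfGraph (by decide))⟩
  refine ⟨_, _, hα, hβ, regularIn_of_pcomp_self hα (pcomp_ptOfGraph_self (by decide)),
    regularIn_of_pcomp_self hβ (pcomp_ptOfGraph_self (by decide)), ?_⟩
  have hαβ : pcomp (ptOfGraph [(1, 1), (3, 3)]) (ptOfGraph [(1, 1), (2, 2), (3, 2)]) =
      ptOfGraph [(1, 1), (3, 2)] := by
    funext x
    by_cases h1 : x = 1
    · subst h1; rfl
    by_cases h3 : x = 3
    · subst h3; rfl
    simp [pcomp, ptOfGraph, List.lookup_cons, beq_false_of_ne h1, beq_false_of_ne h3]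
  rw [hαβ]
  exact not_regularIn_of_injOn_of_dist_lt (fun γ hγ => hγ.1.2) (injOn_ptOfGraph (by decide))
    (x := 1) (y := 3) rfl rfl (by decide)
end

section
/- Let S be an arbitrary semigroup. Then the following are equivalent: (i) for all idempotents e, f ∈ S, the element ef is regular in S; (ii) the set Reg(S) of regular elements of S is closed under multiplication and every a ∈ Reg(S) has some b ∈ Reg(S) with aba = a (i.e., Reg(S) is a regular subsemigroup of S); (iii) every element of the subsemigroup of S generated by the idempotents of S is regular in S. -/

private lemma hall_aux {S : Type*} [Semigroup S] {a x : S} (h : a * x * a = a) (t : S) :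
    a * (x * (a * t)) = a * t := by
  rw [← mul_assoc, ← mul_assoc, h]

/-- Hall's result: in an arbitrary semigroup `S`, the following are equivalent:
(i) products of idempotents are regular; (ii) `Reg S` is a regular
subsemigroup; (iii) every element of the subsemigroup generated by the
idempotents is regular. -/
theorem hall_tfae (S : Type*) [Semigroup S] :
    List.TFAE
      [ ∀ e f : S, e * e = e → f * f = f → ∃ b, (e * f) * b * (e * f) = e * f,
        (∀ a b : S, (∃ x, a * x * a = a) → (∃ y, b * y * b = b) →
            ∃ z, (a * b) * z * (a * b) = a * b) ∧
          (∀ a : S, (∃ x, a * x * a = a) →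
            ∃ b, (∃ y, b * y * b = b) ∧ a * b * a = a),
        ∀ a ∈ Subsemigroup.closure {e : S | e * e = e},
          ∃ b, a * b * a = a ] := by
  tfae_have 1 → 2 := by
    intro h
    constructor
    · rintro a b ⟨x, hx⟩ ⟨y, hy⟩
      have he : (x * a) * (x * a) = x * a := by
        rw [mul_assoc x a, ← mul_assoc a x a, hx]
      have hf : (b * y) * (b * y) = b * y := by
        rw [← mul_assoc, hy]
      obtain ⟨c, hc⟩ := h _ _ he hf
      refine ⟨y * c * x, ?_⟩
      have hy' : b * (y * b) = b := by rw [← mul_assoc, hy]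
      have key : a * ((x * a * (b * y)) * c * (x * a * (b * y))) * b
          = a * (x * a * (b * y)) * b := by rw [hc]
      simp only [mul_assoc] at key ⊢
      rw [hy', hall_aux hx, hall_aux hx] at key
      exact key
    · rintro a ⟨x, hx⟩
      have hx' : a * (x * a) = a := by rw [← mul_assoc, hx]
      refine ⟨x * a * x, ⟨a, ?_⟩, ?_⟩
      · simp only [mul_assoc]
        rw [hall_aux hx, hall_aux hx]
      · simp only [mul_assoc]
        rw [hall_aux hx, hx']
  tfae_have 2 → 3 := by
    rintro ⟨hmul, -⟩ a ha
    induction ha using Subsemigroup.closure_induction with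
    | mem e he => exact ⟨e, by rw [he, he]⟩
    | mul x y _ _ ihx ihy => exact hmul x y ihx ihy
  tfae_have 3 → 1 := by
    intro h e f he hf
    exact h (e * f)
      (mul_mem (Subsemigroup.subset_closure he) (Subsemigroup.subset_closure hf))
  tfae_finish
end

section
/- Let n be a positive integer and let ε ∈ ORCP_n be an idempotent (εε = ε) that is strongly regular, and suppose p = |im ε| ≥ 3. Then there is a natural number a such that im ε = {a+1, a+2, …, a+p}; for every i with 2 ≤ i ≤ p−1 the fiber {x ∈ dom ε : xε = a+i} equals {a+i}; the maximum of the fiber {x ∈ dom ε : xε = a+1} equals a+1; and the minimum of the fiber {x ∈ dom ε : xε = a+p} equals a+p. -/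
/-- `T` is a transversal of the kernel partition `Ker α`: a subset of `dom α`
containing exactly one element of each kernel class. -/
def IsTransversal (α : ℕ → Option ℕ) (T : Set ℕ) : Prop :=
  (∀ t ∈ T, α t ≠ none) ∧ ∀ v ∈ img α, ∃! t, t ∈ T ∧ α t = some v

/-- `T` is a convex subset of `[n]`. -/
def ConvexIn (n : ℕ) (T : Set ℕ) : Prop :=
  ∀ x ∈ T, ∀ y ∈ T, ∀ z ∈ Set.Icc 1 n, x ≤ z → z ≤ y → z ∈ T

/-- A strongly regular element of `ORCP n`: a regular element whose kernel
partition admits a convex transversal. -/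
def StronglyRegular (n : ℕ) (α : ℕ → Option ℕ) : Prop :=
  ORCP n α ∧ RegularIn (ORCP n) α ∧ ∃ T : Set ℕ, IsTransversal α T ∧ ConvexIn n T

/-- Lemma 3.2 of the paper: a strongly regular idempotent `ε ∈ ORCP n` of
height `p ≥ 3` has image `{a+1,…,a+p}`, singleton inner fibers `{a+i}`, the
fiber over `a+1` has maximum `a+1`, and the fiber over `a+p` has minimum
`a+p`. -/
theorem strongly_regular_idempotent_form (n : ℕ) (hn : 0 < n)
    (ε : ℕ → Option ℕ) (hε : ORCP n ε) (hid : pcomp ε ε = ε)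
    (hsr : StronglyRegular n ε) (p : ℕ) (hp : p = (img ε).ncard)
    (hp3 : 3 ≤ p) :
    ∃ a : ℕ, img ε = Set.Icc (a + 1) (a + p) ∧
      (∀ i, 2 ≤ i → i ≤ p - 1 → {x | ε x = some (a + i)} = {a + i}) ∧
      IsGreatest {x | ε x = some (a + 1)} (a + 1) ∧
      IsLeast {x | ε x = some (a + p)} (a + p) := by
  obtain ⟨⟨hPT, hcon⟩, hor⟩ := hε
  -- every image point is a fixed point
  have hfix : ∀ y ∈ img ε, ε y = some y := by
    rintro y ⟨x, hx⟩
    have h := congrFun hid x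
    simp only [pcomp, hx, Option.bind_some] at h
    exact h
  have hsub : img ε ⊆ Set.Icc 1 n := fun y hy => by
    obtain ⟨x, hx⟩ := hy; exact (hPT x y hx).2
  have hfin : (img ε).Finite := (Set.finite_Icc 1 n).subset hsub
  -- ε is order preserving
  have hmono : IsOrderPreserving ε := by
    rcases hor with h | h
    · exact h
    · exfalso
      have h1 : 1 < (img ε).ncard := by omega
      rw [Set.one_lt_ncard_iff hfin] at h1
      obtain ⟨u, v, hu, hv, huv⟩ := h1
      rcases le_total u v with hle | hle
      · have := h u v u v (hfix u hu) (hfix v hv) hle; omega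
      · have := h v u v u (hfix v hv) (hfix u hu) hle; omega
  obtain ⟨_, _, T, ⟨hTdom, hTuniq⟩, hTconv⟩ := hsr
  -- the image is closed under betweenness
  have hbetween : ∀ u ∈ img ε, ∀ v ∈ img ε, ∀ w, u ≤ w → w ≤ v → w ∈ img ε := by
    intro u hu v hv w huw hwv
    rcases eq_or_lt_of_le hwv with rfl | hwv
    · exact hv
    obtain ⟨tu, ⟨htuT, htu⟩, -⟩ := hTuniq u hu
    obtain ⟨tv, ⟨htvT, htv⟩, -⟩ := hTuniq v hv
    have htuv : tu < tv := by
      by_contra hc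
      push_neg at hc
      have := hmono tv tu v u htv htu hc
      omega
    have hdomI : ∀ z, tu ≤ z → z ≤ tv → ∃ c, ε z = some c := by
      intro z h1 h2
      have a1 := (hPT tu u htu).1
      have a2 := (hPT tv v htv).1
      simp only [Set.mem_Icc] at a1 a2
      have hz1 : z ∈ Set.Icc 1 n := by simp only [Set.mem_Icc]; omega
      have hzT : z ∈ T := hTconv tu htuT tv htvT z hz1 h1 h2
      have hne := hTdom z hzT
      cases hεz : ε z with
      | none => exact absurd hεz hne
      | some c => exact ⟨c, rfl⟩
    set g : ℕ → ℕ := fun z => (ε z).getD (w + 1) with hg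
    have hgval : ∀ z c, ε z = some c → g z = c := by
      intro z c hc; simp [hg, hc]
    set P : ℕ → Prop := fun z => tu ≤ z ∧ g z ≤ w with hP
    have hPtu : P tu := ⟨le_refl _, by rw [hgval tu u htu]; exact huw⟩
    set m : ℕ := Nat.findGreatest P tv with hm
    have hmge : tu ≤ m := Nat.le_findGreatest (le_of_lt htuv) hPtu
    have hPm : P m := Nat.findGreatest_spec (le_of_lt htuv) hPtu
    have hmle : m ≤ tv := Nat.findGreatest_le tv
    have hmne : m ≠ tv := by
      intro he
      have := hPm.2
      rw [he, hgval tv v htv] at this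
      omega
    have hmlt : m < tv := lt_of_le_of_ne hmle hmne
    have hnP : ¬ P (m + 1) := Nat.findGreatest_is_greatest (n := tv) (by omega) (by omega)
    obtain ⟨c, hc⟩ := hdomI m hmge (le_of_lt hmlt)
    obtain ⟨c', hc'⟩ := hdomI (m + 1) (by omega) (by omega)
    have hcw : c ≤ w := by have := hPm.2; rwa [hgval m c hc] at this
    have hc'w : w < c' := by
      by_contra hcw'
      exact hnP ⟨by omega, by rw [hgval (m + 1) c' hc']; omega⟩
    have hd : Nat.dist c c' ≤ Nat.dist m (m + 1) := hcon m (m + 1) c c' hc hc'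
    simp [Nat.dist] at hd
    have hcc' : c = w := by omega
    exact ⟨m, by rw [hc, hcc']⟩
  -- min and max of the image
  have hne : (img ε).Nonempty := Set.nonempty_of_ncard_ne_zero (by omega)
  obtain ⟨lo, hlo, hlomin⟩ := Set.exists_min_image (img ε) id hfin hne
  obtain ⟨hi, hhi, hhimax⟩ := Set.exists_max_image (img ε) id hfin hne
  simp only [id] at hlomin hhimax
  have himg : img ε = Set.Icc lo hi := by
    ext y
    constructor
    · intro hy
      exact Set.mem_Icc.2 ⟨hlomin y hy, hhimax y hy⟩
    · intro hy
      obtain ⟨h1, h2⟩ := Set.mem_Icc.1 hy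
      exact hbetween lo hlo hi hhi y h1 h2
  have hlo1 : 1 ≤ lo := (Set.mem_Icc.1 (hsub hlo)).1
  have hlohi : lo ≤ hi := hhimax lo hlo
  have hpeq : p = hi + 1 - lo := by
    rw [himg, ← Finset.coe_Icc, Set.ncard_coe_finset, Nat.card_Icc] at hp
    exact hp
  -- helper facts
  have hflo : ε lo = some lo := hfix lo hlo
  have hfhi : ε hi = some hi := hfix hi hhi
  have keylo : ∀ x c, ε x = some c → x ≤ lo → c ≤ lo :=
    fun x c hx hxl => hmono x lo c lo hx hflo hxl
  have keyhi : ∀ x c, ε x = some c → hi ≤ x → hi ≤ c :=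
    fun x c hx hxl => hmono hi x hi c hfhi hx hxl
  have key : ∀ x c, ε x = some c →
      c - lo + (lo - c) ≤ x - lo + (lo - x) ∧ c - hi + (hi - c) ≤ x - hi + (hi - x) := by
    intro x c hx
    have k1 := hcon x lo c lo hx hflo
    have k2 := hcon x hi c hi hx hfhi
    simp [Nat.dist] at k1 k2
    omega
  refine ⟨lo - 1, ?_, ?_, ?_, ?_⟩
  · rw [himg, show lo - 1 + 1 = lo by omega, show lo - 1 + p = hi by omega]
  · intro i hi2 hi1
    ext x
    simp only [Set.mem_setOf_eq, Set.mem_singleton_iff]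
    constructor
    · intro hx
      rcases le_or_gt x lo with h1 | h1
      · have := keylo x _ hx h1; omega
      · rcases le_or_gt hi x with h2 | h2
        · have := keyhi x _ hx h2; omega
        · have := key x _ hx; omega
    · rintro rfl
      have hmem : lo - 1 + i ∈ img ε := by
        rw [himg]; simp only [Set.mem_Icc]; omega
      exact hfix _ hmem
  · rw [show lo - 1 + 1 = lo by omega]
    refine ⟨hflo, ?_⟩
    intro x hx
    simp only [Set.mem_setOf_eq] at hx
    rcases le_or_gt x lo with h1 | h1
    · exact h1
    · rcases le_or_gt hi x with h2 | h2
      · have := keyhi x _ hx h2; omega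
      · have := key x _ hx; omega
  · rw [show lo - 1 + p = hi by omega]
    refine ⟨hfhi, ?_⟩
    intro x hx
    simp only [Set.mem_setOf_eq] at hx
    rcases le_or_gt hi x with h2 | h2
    · exact h2
    · rcases le_or_gt x lo with h1 | h1
      · have := keylo x _ hx h1; omega
      · have := key x _ hx; omega
end

section
/- Let n be a positive integer and let ε, τ ∈ ORCP_n be idempotents of the following form: there are natural numbers a and p ≥ 1 with im ε = {a+1, …, a+p}, the fiber {x ∈ dom ε : xε = a+i} equal to {a+i} for each 2 ≤ i ≤ p−1, the maximum of the fiber over a+1 equal to a+1, and the minimum of the fiber over a+p equal to a+p; and similarly there are natural numbers b and s ≥ 1 with im τ = {b+1, …, b+s}, the fiber {x ∈ dom τ : xτ = b+j} equal to {b+j} for each 2 ≤ j ≤ s−1, the maximum of the fiber over b+1 equal to b+1, and the minimum of the fiber over b+s equal to b+s. Then the product ετ is a strongly regular element of ORCP_n. -/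
/-- An idempotent of `ORCP n` of the form described in Lemma 3.3: its image is
the interval `{a+1,…,a+p}`, the inner fibers are singletons `{a+i}`, the fiber
over `a+1` has maximum `a+1` and the fiber over `a+p` has minimum `a+p`. -/
def NiceIdem (n : ℕ) (ε : ℕ → Option ℕ) : Prop :=
  ORCP n ε ∧ pcomp ε ε = ε ∧
    ∃ a p : ℕ, 1 ≤ p ∧ img ε = Set.Icc (a + 1) (a + p) ∧
      (∀ i, 2 ≤ i → i ≤ p - 1 → {x | ε x = some (a + i)} = {a + i}) ∧
      IsGreatest {x | ε x = some (a + 1)} (a + 1) ∧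
      IsLeast {x | ε x = some (a + p)} (a + p)

/-- Structure of a nice idempotent: it fixes its image interval pointwise and
acts as the clamp onto that interval on its whole domain. -/
lemma nice_struct {n : ℕ} {ε : ℕ → Option ℕ} (h : NiceIdem n ε) :
    ∃ a p : ℕ, 1 ≤ p ∧
      (∀ x y, ε x = some y → x ∈ Set.Icc 1 n ∧ y ∈ Set.Icc 1 n) ∧
      (∀ z, a + 1 ≤ z → z ≤ a + p → ε z = some z) ∧
      (∀ x y, ε x = some y → y = min (max x (a+1)) (a+p)) := by
  obtain ⟨⟨⟨hpt, hcon⟩, hor⟩, hidem, a, p, hp, himg, -, -, -⟩ := h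
  have hfix : ∀ z, a + 1 ≤ z → z ≤ a + p → ε z = some z := by
    intro z h1 h2
    have hz : z ∈ img ε := by rw [himg]; exact ⟨h1, h2⟩
    obtain ⟨x, hx⟩ := hz
    have hix := congrFun hidem x
    rw [pcomp] at hix
    rw [hx] at hix
    simpa using hix
  have hbd : ∀ x y, ε x = some y → a + 1 ≤ y ∧ y ≤ a + p := by
    intro x y hxy
    have hy : y ∈ img ε := ⟨x, hxy⟩
    rw [himg] at hy; exact hy
  refine ⟨a, p, hp, hpt, hfix, ?_⟩
  intro x y hxy
  obtain ⟨hy1, hy2⟩ := hbd x y hxy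
  rcases eq_or_lt_of_le hp with hp1 | hp2
  · omega
  · have hpres : IsOrderPreserving ε := by
      rcases hor with h | h
      · exact h
      · exfalso
        have := h (a+1) (a+p) (a+1) (a+p) (hfix _ le_rfl (by omega))
          (hfix _ (by omega) le_rfl) (by omega)
        omega
    rcases le_total x (a+1) with hx1 | hx1
    · have := hpres x (a+1) y (a+1) hxy (hfix _ le_rfl (by omega)) hx1
      omega
    · rcases le_total (a+p) x with hx2 | hx2
      · have := hpres (a+p) x (a+p) y (hfix _ (by omega) le_rfl) hxy hx2
        omega
      · have c1 := hcon x (a+1) y (a+1) hxy (hfix _ le_rfl (by omega))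
        have c2 := hcon x (a+p) y (a+p) hxy (hfix _ (by omega) le_rfl)
        unfold Nat.dist at c1 c2
        omega

/-- Lemma 3.3 of the paper: the product of two idempotents of `ORCP n` of the
special form is strongly regular. -/
theorem product_of_nice_idempotents_strongly_regular (n : ℕ) (hn : 0 < n)
    (ε τ : ℕ → Option ℕ) (hε : NiceIdem n ε) (hτ : NiceIdem n τ) :
    StronglyRegular n (pcomp ε τ) := by
  obtain ⟨a, p, hp, hptε, hfixε, hclε⟩ := nice_struct hε
  obtain ⟨b, s, hs, hptτ, hfixτ, hclτ⟩ := nice_struct hτ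
  set c := min (max (a+1) (b+1)) (b+s) with hc
  set d := min (max (a+p) (b+1)) (b+s) with hd
  have hval : ∀ x y, pcomp ε τ x = some y → y = min (max x c) d := by
    intro x y hxy
    rw [pcomp] at hxy
    cases hu : ε x with
    | none => rw [hu] at hxy; simp at hxy
    | some u =>
      rw [hu] at hxy
      simp only [Option.bind_some] at hxy
      have h1 := hclε x u hu
      have h2 := hclτ u y hxy
      omega
  have hpt : ∀ x y, pcomp ε τ x = some y → x ∈ Set.Icc 1 n ∧ y ∈ Set.Icc 1 n := by
    intro x y hxy
    rw [pcomp] at hxy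
    cases hu : ε x with
    | none => rw [hu] at hxy; simp at hxy
    | some u =>
      rw [hu] at hxy
      simp only [Option.bind_some] at hxy
      exact ⟨(hptε x u hu).1, (hptτ u y hxy).2⟩
  have horcp : ORCP n (pcomp ε τ) := by
    refine ⟨⟨hpt, ?_⟩, Or.inl ?_⟩
    · intro x y u v hx hy
      have h1 := hval x u hx
      have h2 := hval y v hy
      unfold Nat.dist; omega
    · intro x y u v hx hy hxy
      have h1 := hval x u hx
      have h2 := hval y v hy
      omega
  rcases lt_or_ge c d with hcd | hcd
  · -- the image interval [c,d] is nondegenerate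
    have hmem : ∀ z, c ≤ z → z ≤ d → pcomp ε τ z = some z := by
      intro z h1 h2
      have hz : a+1 ≤ z ∧ z ≤ a+p ∧ b+1 ≤ z ∧ z ≤ b+s := by omega
      rw [pcomp, hfixε z hz.1 hz.2.1]
      simpa using hfixτ z hz.2.2.1 hz.2.2.2
    refine ⟨horcp, ⟨fun z => if c ≤ z ∧ z ≤ d then some z else none,
      ⟨⟨?_, ?_⟩, Or.inl ?_⟩, ?_⟩, Set.Icc c d, ⟨?_, ?_⟩, ?_⟩
    · -- IsPT of β
      intro z w hzw
      by_cases hz : c ≤ z ∧ z ≤ d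
      · simp only [if_pos hz] at hzw
        obtain ⟨hzc, hzd⟩ := hz
        have h1 := (hpt c c (hmem c le_rfl (le_of_lt hcd))).1
        have h2 := (hpt d d (hmem d (le_of_lt hcd) le_rfl)).1
        simp only [Set.mem_Icc] at h1 h2 ⊢
        have : z = w := by simpa using hzw
        omega
      · simp [if_neg hz] at hzw
    · -- contraction of β
      intro z1 z2 w1 w2 h1 h2
      by_cases hz1 : c ≤ z1 ∧ z1 ≤ d
      · by_cases hz2 : c ≤ z2 ∧ z2 ≤ d
        · simp only [if_pos hz1] at h1
          simp only [if_pos hz2] at h2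
          have e1 : z1 = w1 := by simpa using h1
          have e2 : z2 = w2 := by simpa using h2
          subst e1; subst e2; exact le_rfl
        · simp [if_neg hz2] at h2
      · simp [if_neg hz1] at h1
    · -- order preserving of β
      intro z1 z2 w1 w2 h1 h2 hz
      by_cases hz1 : c ≤ z1 ∧ z1 ≤ d
      · by_cases hz2 : c ≤ z2 ∧ z2 ≤ d
        · simp only [if_pos hz1] at h1
          simp only [if_pos hz2] at h2
          have e1 : z1 = w1 := by simpa using h1
          have e2 : z2 = w2 := by simpa using h2
          omega
        · simp [if_neg hz2] at h2
      · simp [if_neg hz1] at h1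
    · -- (ετ)β(ετ) = ετ
      funext x
      show ((pcomp ε τ x).bind _).bind (pcomp ε τ) = pcomp ε τ x
      cases h : pcomp ε τ x with
      | none => simp
      | some y =>
        have hy := hval x y h
        have hyc : c ≤ y ∧ y ≤ d := by omega
        simp only [Option.bind_some, if_pos hyc, hmem y hyc.1 hyc.2]
    · -- transversal: domain condition
      intro t ht
      simp only [Set.mem_Icc] at ht
      rw [hmem t ht.1 ht.2]
      simp
    · -- transversal: unique representative
      intro v hv
      obtain ⟨x, hx⟩ := hv
      have hvv := hval x v hx
      have hvc : c ≤ v ∧ v ≤ d := by omega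
      refine ⟨v, ⟨Set.mem_Icc.2 hvc, hmem v hvc.1 hvc.2⟩, ?_⟩
      rintro t ⟨ht, htv⟩
      simp only [Set.mem_Icc] at ht
      rw [hmem t ht.1 ht.2] at htv
      exact Option.some.inj htv
    · -- convexity of [c,d]
      intro x hx y hy z hz h1 h2
      simp only [Set.mem_Icc] at *
      omega
  · -- degenerate case: every value equals d
    by_cases hall : ∀ x, pcomp ε τ x = none
    · refine ⟨horcp, ⟨fun _ => none, ⟨⟨?_, ?_⟩, Or.inl ?_⟩, ?_⟩, ∅, ⟨?_, ?_⟩, ?_⟩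
      · intro x y h; simp at h
      · intro x y u v h; simp at h
      · intro x y u v h; simp at h
      · funext x
        show ((pcomp ε τ x).bind _).bind (pcomp ε τ) = pcomp ε τ x
        rw [hall x]; rfl
      · intro t ht; exact absurd ht (Set.notMem_empty t)
      · rintro v ⟨x, hx⟩
        rw [hall x] at hx; simp at hx
      · intro x hx; exact absurd hx (Set.notMem_empty x)
    · push_neg at hall
      obtain ⟨x0, hx0⟩ := hall
      cases h0 : pcomp ε τ x0 with
      | none => exact absurd h0 hx0
      | some y0 =>
        have hy0 : y0 = d := by have := hval x0 y0 h0; omega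
        subst hy0
        have hbound := hpt x0 d h0
        refine ⟨horcp, ⟨fun z => if z = d then some x0 else none,
          ⟨⟨?_, ?_⟩, Or.inl ?_⟩, ?_⟩, {x0}, ⟨?_, ?_⟩, ?_⟩
        · intro z w hzw
          by_cases hz : z = d
          · simp only [if_pos hz] at hzw
            have : x0 = w := by simpa using hzw
            subst hz; subst this
            exact ⟨hbound.2, hbound.1⟩
          · simp [if_neg hz] at hzw
        · intro z1 z2 w1 w2 h1 h2
          by_cases hz1 : z1 = d
          · by_cases hz2 : z2 = d
            · simp only [if_pos hz1] at h1
              simp only [if_pos hz2] at h2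
              have e1 : x0 = w1 := by simpa using h1
              have e2 : x0 = w2 := by simpa using h2
              subst hz1; subst hz2
              rw [← e1, ← e2]
              simp [Nat.dist]
            · simp [if_neg hz2] at h2
          · simp [if_neg hz1] at h1
        · intro z1 z2 w1 w2 h1 h2 hz
          by_cases hz1 : z1 = d
          · by_cases hz2 : z2 = d
            · simp only [if_pos hz1] at h1
              simp only [if_pos hz2] at h2
              have e1 : x0 = w1 := by simpa using h1
              have e2 : x0 = w2 := by simpa using h2
              omega
            · simp [if_neg hz2] at h2
          · simp [if_neg hz1] at h1
        · funext x
          show ((pcomp ε τ x).bind _).bind (pcomp ε τ) = pcomp ε τ x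
          cases h : pcomp ε τ x with
          | none => simp
          | some y =>
            have hy : y = d := by have := hval x y h; omega
            subst hy
            simp only [Option.bind_some, if_pos rfl]; simp [h0]
        · intro t ht
          rw [Set.mem_singleton_iff] at ht
          subst ht
          rw [h0]; simp
        · rintro v ⟨x, hx⟩
          have hv : v = d := by have := hval x v hx; omega
          subst hv
          refine ⟨x0, ⟨rfl, h0⟩, ?_⟩
          rintro t ⟨ht, -⟩
          exact ht
        · intro x hx y hy z hz h1 h2
          rw [Set.mem_singleton_iff] at hx hy ⊢
          omega
end
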